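/- Let u, v ∈ {0,1}^n with Lo(u) ≠ Lo(v), and let x be sampled from the one-offspring version of either one-point crossover or uniform crossover applied to u and v. Then Pr(Lo(x) > min{Lo(u), Lo(v)}) ≥ 1/2. -/

import Mathlib

open scoped ENNReal

/-- The product distribution on `Fin n → X`: each coordinate sampled
independently from `p i`. -/
noncomputable def pmfPi {n : ℕ} {X : Type*} [Fintype X] (p : Fin n → PMF X) :
    PMF (Fin n → X) :=
  PMF.ofFintype (fun f => ∏ i, p i (f i)) (by
    rw [← Fintype.prod_sum]
    exact Finset.prod_eq_one (fun i _ => by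
      rw [← tsum_fintype (L := .unconditional _)]; exact (p i).tsum_coe))

/-- `LeadingOnes`: the number of leading one-bits of the bitstring `x`. -/
def Lo {n : ℕ} (x : Fin n → Bool) : ℕ :=
  (Finset.univ.filter fun i : Fin n => ∀ j ≤ i, x j = true).card

/-- `OneMax`: the number of one-bits of the bitstring `x`. -/
def Om {n : ℕ} (x : Fin n → Bool) : ℕ :=
  (Finset.univ.filter fun i : Fin n => x i = true).card

/-- The two offspring of a mask-based crossover of `u` and `v` with mask `s`:
at each position, the first offspring copies the bit of `u` if `s i` and the
bit of `v` otherwise, the second offspring does the opposite. -/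
def crossPair {n : ℕ} (u v s : Fin n → Bool) : (Fin n → Bool) × (Fin n → Bool) :=
  (fun i => if s i then u i else v i, fun i => if s i then v i else u i)

/-- One-offspring uniform crossover: the mask is uniform (each position
independently copies the bit of `u` or of `v` with probability `1/2`) and the
returned offspring is chosen uniformly among the two offspring. -/
noncomputable def uniformXover {n : ℕ} (u v : Fin n → Bool) : PMF (Fin n → Bool) :=
  (pmfPi fun _ : Fin n => PMF.uniformOfFintype Bool).bind fun s =>
    (PMF.uniformOfFintype Bool).map fun b =>
      if b then (crossPair u v s).1 else (crossPair u v s).2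

/-- The mask corresponding to the cut point `c` of one-point crossover. -/
def onePointMask (n : ℕ) (c : Fin (n + 1)) : Fin n → Bool :=
  fun i => decide ((i : ℕ) < (c : ℕ))

/-- One-offspring one-point crossover: a cut point is chosen uniformly at
random, the first offspring takes the prefix of `u` up to the cut and the
suffix of `v` (the second does the opposite), and the returned offspring is
chosen uniformly among the two. -/
noncomputable def onePointXover {n : ℕ} (u v : Fin n → Bool) : PMF (Fin n → Bool) :=
  (PMF.uniformOfFintype (Fin (n + 1))).bind fun c =>
    (PMF.uniformOfFintype Bool).map fun b =>
      if b then (crossPair u v (onePointMask n c)).1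
      else (crossPair u v (onePointMask n c)).2

/-!
Below position `m = min (Lo u) (Lo v)` both parents have ones, and at position `m` the parent
with more leading ones has a one. Whatever the mask, the two offspring share out the bits of
`u` and `v` position by position, so both inherit the common prefix of ones and one of them
inherits the one at position `m`. The one-offspring version returns that offspring with
probability `1/2`, for every mask.
-/

section LeadingOnes

variable {n : ℕ}

lemma Lo_le (x : Fin n → Bool) : Lo x ≤ n :=
  (Finset.card_le_univ _).trans_eq (Fintype.card_fin n)

lemma apply_eq_true_of_lt_Lo (x : Fin n → Bool) (j : Fin n) (h : (j : ℕ) < Lo x) :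
    x j = true := by
  by_contra hj
  have hsub : (Finset.univ.filter fun i : Fin n => ∀ k ≤ i, x k = true) ⊆ Finset.Iio j := by
    intro i hi
    rw [Finset.mem_filter] at hi
    rw [Finset.mem_Iio]
    by_contra hij
    exact hj (hi.2 j (not_lt.mp hij))
  exact ((Finset.card_le_card hsub).trans_eq (Fin.card_Iio j)).not_gt h

lemma lt_Lo_of_forall_le {m : ℕ} (hm : m < n) (x : Fin n → Bool)
    (h : ∀ j : Fin n, (j : ℕ) ≤ m → x j = true) : m < Lo x := by
  have hsub : Finset.Iic (⟨m, hm⟩ : Fin n) ⊆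
      Finset.univ.filter fun i : Fin n => ∀ j ≤ i, x j = true := by
    intro i hi
    rw [Finset.mem_Iic] at hi
    rw [Finset.mem_filter]
    exact ⟨Finset.mem_univ i, fun j hj => h j (Fin.le_def.mp (hj.trans hi))⟩
  have := Finset.card_le_card hsub
  rwa [Fin.card_Iic] at this

end LeadingOnes

section Crossover

variable {n : ℕ} (u v s : Fin n → Bool)

lemma crossPair_swap : crossPair v u s = (crossPair u v s).swap := by
  simp [crossPair]

lemma lt_Lo_crossPair_of_lt (h : Lo u < Lo v) :
    Lo u < Lo (crossPair u v s).1 ∨ Lo u < Lo (crossPair u v s).2 := by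
  have hn : Lo u < n := h.trans_le (Lo_le v)
  set m : Fin n := ⟨Lo u, hn⟩
  have hvm : v m = true := apply_eq_true_of_lt_Lo v m h
  have hprefix : ∀ j : Fin n, (j : ℕ) < Lo u →
      (crossPair u v s).1 j = true ∧ (crossPair u v s).2 j = true := fun j hj => by
    have hu := apply_eq_true_of_lt_Lo u j hj
    have hv := apply_eq_true_of_lt_Lo v j (hj.trans h)
    cases s j <;> simp [crossPair, *]
  cases hs : s m
  · refine Or.inl (lt_Lo_of_forall_le hn _ fun j hj => ?_)
    rcases hj.lt_or_eq with hj | hj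
    · exact (hprefix j hj).1
    · simp [show j = m from Fin.ext hj, crossPair, hs, hvm]
  · refine Or.inr (lt_Lo_of_forall_le hn _ fun j hj => ?_)
    rcases hj.lt_or_eq with hj | hj
    · exact (hprefix j hj).2
    · simp [show j = m from Fin.ext hj, crossPair, hs, hvm]

lemma min_lt_Lo_crossPair (hne : Lo u ≠ Lo v) :
    min (Lo u) (Lo v) < Lo (crossPair u v s).1 ∨
      min (Lo u) (Lo v) < Lo (crossPair u v s).2 := by
  rcases hne.lt_or_gt with h | h
  · rw [min_eq_left h.le]
    exact lt_Lo_crossPair_of_lt u v s h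
  · rw [min_eq_right h.le]
    have := lt_Lo_crossPair_of_lt v u s h
    rw [crossPair_swap] at this
    exact this.symm

end Crossover

section Coin

open PMF

lemma inv_two_le_toOuterMeasure_map_coin {β : Type*} {x y : β} {E : Set β}
    (h : x ∈ E ∨ y ∈ E) :
    (2 : ℝ≥0∞)⁻¹ ≤ ((uniformOfFintype Bool).map fun b => if b then x else y).toOuterMeasure E := by
  obtain ⟨b, hb⟩ : ∃ b : Bool, (if b then x else y) ∈ E :=
    h.elim (fun hx => ⟨true, hx⟩) fun hy => ⟨false, hy⟩
  rw [toOuterMeasure_map_apply]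
  calc (2 : ℝ≥0∞)⁻¹ = (uniformOfFintype Bool).toOuterMeasure {b} := by
        simp [uniformOfFintype_apply]
    _ ≤ _ := MeasureTheory.measure_mono (Set.singleton_subset_iff.mpr hb)

lemma le_toOuterMeasure_bind_of_forall_le {α β : Type*} (q : PMF α) (f : α → PMF β)
    {E : Set β} {c : ℝ≥0∞} (h : ∀ a, c ≤ (f a).toOuterMeasure E) :
    c ≤ (q.bind f).toOuterMeasure E :=
  calc c = ∑' a, q a * c := by rw [ENNReal.tsum_mul_right, q.tsum_coe, one_mul]
    _ ≤ ∑' a, q a * (f a).toOuterMeasure E := ENNReal.tsum_le_tsum fun a => by gcongr; exact h a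
    _ = (q.bind f).toOuterMeasure E := (toOuterMeasure_bind_apply q f E).symm

lemma inv_two_le_toOuterMeasure_bind_coin {α β : Type*} (q : PMF α) (F G : α → β) {E : Set β}
    (h : ∀ a, F a ∈ E ∨ G a ∈ E) :
    (2 : ℝ≥0∞)⁻¹ ≤
      (q.bind fun a => (uniformOfFintype Bool).map fun b => if b then F a else G a).toOuterMeasure E :=
  le_toOuterMeasure_bind_of_forall_le q _ fun a => inv_two_le_toOuterMeasure_map_coin (h a)

end Coin

/-- **Lemma 2(2)**: if `Lo(u) ≠ Lo(v)` and `x` is sampled from the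
one-offspring version of one-point or uniform crossover applied to `u, v`,
then `Pr(Lo(x) > min{Lo(u), Lo(v)}) ≥ 1/2`. -/
theorem crossover_improves_leading_ones
    {n : ℕ} (u v : Fin n → Bool)
    (pxor : (Fin n → Bool) → (Fin n → Bool) → PMF (Fin n → Bool))
    (hxor : pxor = uniformXover ∨ pxor = onePointXover)
    (hne : Lo u ≠ Lo v) :
    ENNReal.ofReal (1 / 2) ≤
      (pxor u v).toOuterMeasure {x | min (Lo u) (Lo v) < Lo x} := by
  rw [one_div, ENNReal.ofReal_inv_of_pos two_pos, ENNReal.ofReal_ofNat]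
  rcases hxor with rfl | rfl
  · exact inv_two_le_toOuterMeasure_bind_coin _ _ _ fun s => min_lt_Lo_crossPair u v s hne
  · exact inv_two_le_toOuterMeasure_bind_coin _ _ _ fun c =>
      min_lt_Lo_crossPair u v (onePointMask n c) hne
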